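/- Let q = p^α, where p is an odd prime and α ≥ 1 is an integer, and let A, B, C, D, E be complex-valued Dirichlet characters mod q. Then ₃F₂(A,B,C;D,E|1) = (A·E)(−1) · ₃F₂(A, B, C̄·E; A·B·D̄, E | 1). -/

import Mathlib

open Finset

/-- The complex-conjugate Dirichlet character. -/
noncomputable def conjChar {q : ℕ} (A : DirichletCharacter ℂ q) : DirichletCharacter ℂ q :=
  A.ringHomComp (starRingEnd ℂ)

/-- The binomial coefficient `binom(A,B) = B(-1)/q * J(A, B̄)` for Dirichlet characters. -/
noncomputable def dBinom {q : ℕ} [NeZero q] (A B : DirichletCharacter ℂ q) : ℂ :=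
  B (-1) / q * jacobiSum A (conjChar B)

/-- The hypergeometric function `₃F₂` for Dirichlet characters. -/
noncomputable def threeF₂ {q : ℕ} [NeZero q] (A B C D E : DirichletCharacter ℂ q)
    (x : ZMod q) : ℂ :=
  (q / (Nat.totient q : ℂ)) *
    ∑ᶠ χ : DirichletCharacter ℂ q,
      dBinom (A * χ) χ * dBinom (B * χ) (D * χ) * dBinom (C * χ) (E * χ) * χ x

/-!
Expanding the three Jacobi sums and summing over `χ` by orthogonality turns `₃F₂(A,B,C;D,E|1)`
into `(DE)(-1) / q²` times the sum of `A(x) B(y) D̄(1-y) C(z) Ē(1-z)` over the points of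
`xyz + (1-x)(1-y)(1-z) = 0` with `xyz` a unit. The involution
`(x, y, z) ↦ (x / (1-y), 1 - 1 / (1-y), 1 / z)` of this locus carries the summand for
`(A, B, C̄E; ABD̄, E)` to the summand for `(A, B, C; D, E)` times `(BE)(-1)`.
-/

section CharacterValues

variable {n : ℕ}

theorem conjChar_eq_inv (χ : DirichletCharacter ℂ n) : conjChar χ = χ⁻¹ :=
  MulChar.ext' fun a ↦ MulChar.star_apply' χ a

theorem DirichletCharacter.apply_neg_one_mul_self {R : Type*} [CommRing R]
    (χ : DirichletCharacter R n) : χ (-1) * χ (-1) = 1 := by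
  rw [← map_mul, neg_mul_neg, one_mul, map_one]

theorem DirichletCharacter.inv_apply_neg_one {F : Type*} [Field F] (χ : DirichletCharacter F n) :
    χ⁻¹ (-1) = χ (-1) := by
  rw [MulChar.inv_apply_eq_inv', inv_eq_of_mul_eq_one_right χ.apply_neg_one_mul_self]

theorem DirichletCharacter.apply_inv_of_isUnit {F : Type*} [Field F] (χ : DirichletCharacter F n)
    {u : ZMod n} (hu : IsUnit u) : χ u⁻¹ = (χ u)⁻¹ := by
  refine eq_inv_of_mul_eq_one_right ?_
  rw [← map_mul, ZMod.mul_inv_of_unit u hu, map_one]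

theorem DirichletCharacter.sum_apply_mul_inv_apply [NeZero n] {F : Type*} [Field F]
    [HasEnoughRootsOfUnity F (Monoid.exponent (ZMod n)ˣ)] (v w : ZMod n) :
    ∑ χ : DirichletCharacter F n, χ v * χ⁻¹ w =
      if IsUnit v ∧ v = w then (n.totient : F) else 0 := by
  by_cases hw : IsUnit w
  · simp only [MulChar.inv_apply_eq_inv', ← apply_inv_of_isUnit _ hw]
    rw [sum_congr rfl fun χ _ ↦ mul_comm _ _, sum_char_inv_mul_char_eq F hw v]
    exact if_congr ⟨fun h ↦ ⟨h ▸ hw, h.symm⟩, fun h ↦ h.2.symm⟩ rfl rfl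
  · rw [if_neg fun h : IsUnit v ∧ v = w ↦ hw (h.2 ▸ h.1)]
    exact sum_eq_zero fun χ _ ↦ by rw [χ⁻¹.map_nonunit hw, mul_zero]

end CharacterValues

theorem ZMod.isUnit_inv_of_isUnit {n : ℕ} {u : ZMod n} (hu : IsUnit u) : IsUnit u⁻¹ :=
  .of_mul_eq_one u (ZMod.inv_mul_of_unit u hu)

theorem ZMod.inv_inv_of_isUnit {n : ℕ} {u : ZMod n} (hu : IsUnit u) : u⁻¹⁻¹ = u :=
  ZMod.inv_eq_of_mul_eq_one n _ _ (ZMod.inv_mul_of_unit u hu)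

section DBinom

variable {q : ℕ} [NeZero q]

theorem dBinom_mul_self (A χ : DirichletCharacter ℂ q) :
    dBinom (A * χ) χ = χ (-1) / q * ∑ x, A x * (χ x * χ⁻¹ (1 - x)) := by
  simp only [dBinom, jacobiSum, conjChar_eq_inv, MulChar.mul_apply, mul_assoc]

theorem dBinom_mul_mul (A D χ : DirichletCharacter ℂ q) :
    dBinom (A * χ) (D * χ) =
      D (-1) * χ (-1) / q * ∑ y, A y * D⁻¹ (1 - y) * (χ y * χ⁻¹ (1 - y)) := by
  simp only [dBinom, jacobiSum, conjChar_eq_inv, mul_inv, MulChar.mul_apply]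
  congr 1
  exact sum_congr rfl fun y _ ↦ by ring

end DBinom

namespace ThreeF₂

variable {q : ℕ} [NeZero q]

noncomputable def locus (q : ℕ) [NeZero q] : Finset (ZMod q × ZMod q × ZMod q) :=
  univ.filter fun t ↦ IsUnit (t.1 * t.2.1 * t.2.2) ∧
    t.1 * t.2.1 * t.2.2 + (1 - t.1) * (1 - t.2.1) * (1 - t.2.2) = 0

noncomputable def weight (A B C D E : DirichletCharacter ℂ q)
    (t : ZMod q × ZMod q × ZMod q) : ℂ :=
  A t.1 * (B t.2.1 * D⁻¹ (1 - t.2.1)) * (C t.2.2 * E⁻¹ (1 - t.2.2))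

noncomputable def involution (t : ZMod q × ZMod q × ZMod q) : ZMod q × ZMod q × ZMod q :=
  (t.1 * (1 - t.2.1)⁻¹, 1 - (1 - t.2.1)⁻¹, t.2.2⁻¹)

theorem dBinom_prod_eq_sum (A B C D E χ : DirichletCharacter ℂ q) :
    dBinom (A * χ) χ * dBinom (B * χ) (D * χ) * dBinom (C * χ) (E * χ) * χ 1 =
      D (-1) * E (-1) / q ^ 3 * ∑ t, weight A B C D E t *
        (χ (-(t.1 * t.2.1 * t.2.2)) * χ⁻¹ ((1 - t.1) * (1 - t.2.1) * (1 - t.2.2))) := by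
  rw [dBinom_mul_self, dBinom_mul_mul, dBinom_mul_mul, map_one, mul_one]
  set Sx := ∑ x, A x * (χ x * χ⁻¹ (1 - x)) with hSx
  set Sy := ∑ y, B y * D⁻¹ (1 - y) * (χ y * χ⁻¹ (1 - y)) with hSy
  set Sz := ∑ z, C z * E⁻¹ (1 - z) * (χ z * χ⁻¹ (1 - z)) with hSz
  have hsum : χ (-1) * (Sz * Sy * Sx) = ∑ t, weight A B C D E t *
      (χ (-(t.1 * t.2.1 * t.2.2)) * χ⁻¹ ((1 - t.1) * (1 - t.2.1) * (1 - t.2.2))) := by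
    simp only [hSx, hSy, hSz, mul_sum, sum_mul, Fintype.sum_prod_type, weight]
    refine sum_congr rfl fun x _ ↦ sum_congr rfl fun y _ ↦ sum_congr rfl fun z _ ↦ ?_
    simp only [neg_eq_neg_one_mul (x * y * z), map_mul]
    ring
  rw [← hsum]
  linear_combination
    (D (-1) * E (-1) / q ^ 3 * χ (-1) * (Sz * Sy * Sx)) * χ.apply_neg_one_mul_self

theorem sum_dBinom_prod_eq_sum_locus (A B C D E : DirichletCharacter ℂ q) :
    ∑ χ : DirichletCharacter ℂ q,
        dBinom (A * χ) χ * dBinom (B * χ) (D * χ) * dBinom (C * χ) (E * χ) * χ 1 =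
      D (-1) * E (-1) * q.totient / q ^ 3 * ∑ t ∈ locus q, weight A B C D E t := by
  simp only [dBinom_prod_eq_sum, ← mul_sum]
  rw [sum_comm, locus, sum_filter, mul_sum, mul_sum]
  refine sum_congr rfl fun t _ ↦ ?_
  rw [← mul_sum, DirichletCharacter.sum_apply_mul_inv_apply]
  simp only [IsUnit.neg_iff, neg_eq_iff_add_eq_zero]
  split_ifs <;> ring

theorem mem_locus {t : ZMod q × ZMod q × ZMod q} :
    t ∈ locus q ↔ IsUnit (t.1 * t.2.1 * t.2.2) ∧
      t.1 * t.2.1 * t.2.2 + (1 - t.1) * (1 - t.2.1) * (1 - t.2.2) = 0 := by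
  simp [locus]

theorem isUnit_of_mem_locus {x y z : ZMod q} (h : (x, y, z) ∈ locus q) :
    IsUnit x ∧ IsUnit y ∧ IsUnit z ∧ IsUnit (1 - y) := by
  obtain ⟨hu, hK⟩ := mem_locus.1 h
  have hu' : IsUnit ((1 - x) * (1 - y) * (1 - z)) := by
    rw [eq_neg_of_add_eq_zero_right hK]
    exact hu.neg
  simp only [IsUnit.mul_iff] at hu hu'
  exact ⟨hu.1.1, hu.1.2, hu.2, hu'.1.2⟩

theorem involution_mem {t : ZMod q × ZMod q × ZMod q} (ht : t ∈ locus q) :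
    involution t ∈ locus q := by
  obtain ⟨x, y, z⟩ := t
  obtain ⟨hx, hy, hz, h1y⟩ := isUnit_of_mem_locus ht
  have hK : x * y * z + (1 - x) * (1 - y) * (1 - z) = 0 := (mem_locus.1 ht).2
  simp only [involution, mem_locus, sub_sub_cancel, IsUnit.mul_iff]
  set w := (1 - y)⁻¹
  have hw : w * (1 - y) = 1 := ZMod.inv_mul_of_unit _ h1y
  have hzz : z⁻¹ * z = 1 := ZMod.inv_mul_of_unit _ hz
  have h1w : (1 - w) * (1 - y) = -y := by linear_combination -hw
  refine ⟨⟨⟨⟨hx, ZMod.isUnit_inv_of_isUnit h1y⟩, ?_⟩, ZMod.isUnit_inv_of_isUnit hz⟩,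
    ?_⟩
  · exact isUnit_of_mul_isUnit_left (h1w ▸ hy.neg)
  · refine ((h1y.mul h1y).mul hz).mul_right_eq_zero.1 ?_
    calc (1 - y) * (1 - y) * z * (x * w * (1 - w) * z⁻¹ + (1 - x * w) * w * (1 - z⁻¹))
        = x * ((1 - w) * (1 - y)) * (w * (1 - y)) * (z⁻¹ * z) +
            ((1 - y) - x * (w * (1 - y))) * (w * (1 - y)) * (z - z⁻¹ * z) := by ring
      _ = x * -y * 1 * 1 + ((1 - y) - x * 1) * 1 * (z - 1) := by rw [h1w, hw, hzz]
      _ = -(x * y * z + (1 - x) * (1 - y) * (1 - z)) := by ring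
      _ = 0 := by rw [hK, neg_zero]

theorem involution_involution {t : ZMod q × ZMod q × ZMod q} (ht : t ∈ locus q) :
    involution (involution t) = t := by
  obtain ⟨x, y, z⟩ := t
  obtain ⟨-, -, hz, h1y⟩ := isUnit_of_mem_locus ht
  simp only [involution, sub_sub_cancel, ZMod.inv_inv_of_isUnit h1y,
    ZMod.inv_inv_of_isUnit hz, mul_assoc, ZMod.inv_mul_of_unit _ h1y, mul_one]

theorem weight_involution (A B C D E : DirichletCharacter ℂ q)
    {t : ZMod q × ZMod q × ZMod q} (ht : t ∈ locus q) :
    E (-1) * weight A B C D E t =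
      B (-1) * weight A B (C⁻¹ * E) (A * B * D⁻¹) E (involution t) := by
  obtain ⟨x, y, z⟩ := t
  obtain ⟨-, -, hz, h1y⟩ := isUnit_of_mem_locus ht
  have h1w : 1 - (1 - y)⁻¹ = -1 * y * (1 - y)⁻¹ := by
    linear_combination -ZMod.inv_mul_of_unit _ h1y
  have h1z : 1 - z⁻¹ = -1 * (1 - z) * z⁻¹ := by linear_combination -ZMod.inv_mul_of_unit _ hz
  simp only [weight, involution, sub_sub_cancel]
  simp only [h1w, h1z, map_mul]
  rw [DirichletCharacter.inv_apply_neg_one]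
  simp only [MulChar.mul_apply, MulChar.inv_apply_eq_inv', inv_inv,
    DirichletCharacter.apply_inv_of_isUnit _ h1y, DirichletCharacter.apply_inv_of_isUnit _ hz]
  have hA : A (1 - y) ≠ 0 := (h1y.map A).ne_zero
  have hB : B (1 - y) ≠ 0 := (h1y.map B).ne_zero
  have hD : D (1 - y) ≠ 0 := (h1y.map D).ne_zero
  have hE : E z ≠ 0 := (hz.map E).ne_zero
  field_simp
  linear_combination -(A x * B y * C z * E (-1) / E (1 - z)) * B.apply_neg_one_mul_self

theorem sum_weight_transform₃ (A B C D E : DirichletCharacter ℂ q) :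
    E (-1) * ∑ t ∈ locus q, weight A B C D E t =
      B (-1) * ∑ t ∈ locus q, weight A B (C⁻¹ * E) (A * B * D⁻¹) E t := by
  rw [mul_sum, mul_sum]
  exact sum_nbij' involution involution (fun _ ↦ involution_mem) (fun _ ↦ involution_mem)
    (fun _ ↦ involution_involution) (fun _ ↦ involution_involution)
    (fun _ ↦ weight_involution A B C D E)

end ThreeF₂

theorem threeF₂_one_eq_sum_locus {q : ℕ} [NeZero q] (A B C D E : DirichletCharacter ℂ q) :
    threeF₂ A B C D E 1 =
      D (-1) * E (-1) / q ^ 2 * ∑ t ∈ ThreeF₂.locus q, ThreeF₂.weight A B C D E t := by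
  have hφ : (q.totient : ℂ) ≠ 0 := Nat.cast_ne_zero.2 (Nat.totient_pos.2 (NeZero.pos q)).ne'
  rw [threeF₂, finsum_eq_sum_of_fintype, ThreeF₂.sum_dBinom_prod_eq_sum_locus]
  field_simp

theorem threeF₂_transform₃_general (q : ℕ) [NeZero q] (A B C D E : DirichletCharacter ℂ q) :
    threeF₂ A B C D E 1 =
      (A * E) (-1) * threeF₂ A B (conjChar C * E) (A * B * conjChar D) E 1 := by
  rw [threeF₂_one_eq_sum_locus, threeF₂_one_eq_sum_locus, conjChar_eq_inv, conjChar_eq_inv]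
  have key := ThreeF₂.sum_weight_transform₃ A B C D E
  generalize ∑ t ∈ ThreeF₂.locus q, ThreeF₂.weight A B C D E t = S at key ⊢
  generalize ∑ t ∈ ThreeF₂.locus q,
    ThreeF₂.weight A B (C⁻¹ * E) (A * B * D⁻¹) E t = S' at key ⊢
  simp only [MulChar.mul_apply, DirichletCharacter.inv_apply_neg_one]
  linear_combination (D (-1) / q ^ 2) * key -
    (B (-1) * D (-1) * S' / q ^ 2) *
      (E (-1) * E (-1) * A.apply_neg_one_mul_self + E.apply_neg_one_mul_self)

theorem threeF₂_transform₃ (p α : ℕ) (hp : p.Prime) (hodd : Odd p) (hα : 1 ≤ α)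
    (q : ℕ) (hq : q = p ^ α) [NeZero q] (A B C D E : DirichletCharacter ℂ q) :
    threeF₂ A B C D E 1 =
      (A * E) (-1) * threeF₂ A B (conjChar C * E) (A * B * conjChar D) E 1 :=
  threeF₂_transform₃_general q A B C D E
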